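/- Let G be a cubic graph (every vertex has degree 3) and let C be a minimum trail cover of G. Then every vertex of G is traversed by at most two trails of C, and by deleting the final edge of one trail at each doubly-traversed vertex one obtains a path cover of G with |C| paths. Consequently, the minimum trail cover size of a cubic graph equals its minimum path cover size. -/

import Mathlib

/-- A trail in a simple graph: a walk with no repeated edges, together with its endpoints. -/
structure GraphTrail {V : Type*} (G : SimpleGraph V) where
  first : V
  last : V
  walk : G.Walk first last
  isTrail : walk.IsTrail

namespace GraphTrail

variable {V : Type*} {G : SimpleGraph V}

/-- The list of edges traversed by the trail. -/
def edges (T : GraphTrail G) : List (Sym2 V) := T.walk.edges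

/-- The list of vertices visited by the trail (with multiplicity). -/
def support (T : GraphTrail G) : List V := T.walk.support

end GraphTrail

/-- A collection of trails is edge-disjoint if no two distinct trails share an edge. -/
def TrailsEdgeDisjoint {V : Type*} {G : SimpleGraph V} (C : Finset (GraphTrail G)) : Prop :=
  (C : Set (GraphTrail G)).Pairwise fun T₁ T₂ => ∀ e, e ∈ T₁.edges → e ∉ T₂.edges

/-- A trail cover of `G`: a set of pairwise edge-disjoint trails visiting every vertex. -/
def IsTrailCover {V : Type*} (G : SimpleGraph V) (C : Finset (GraphTrail G)) : Prop :=
  TrailsEdgeDisjoint C ∧ ∀ v : V, ∃ T ∈ C, v ∈ T.support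

/-- A trail decomposition of `G`: a set of pairwise edge-disjoint trails covering every edge. -/
def IsTrailDecomposition {V : Type*} (G : SimpleGraph V) (C : Finset (GraphTrail G)) : Prop :=
  TrailsEdgeDisjoint C ∧ ∀ e ∈ G.edgeSet, ∃ T ∈ C, e ∈ T.edges

/-- A path cover of `G`: a set of vertex-disjoint paths covering every vertex. -/
def IsPathCover {V : Type*} (G : SimpleGraph V) (P : Finset (GraphTrail G)) : Prop :=
  (∀ T ∈ P, T.walk.IsPath) ∧
  (∀ v : V, ∃ T ∈ P, v ∈ T.support) ∧
  (P : Set (GraphTrail G)).Pairwise fun T₁ T₂ => ∀ v, v ∈ T₁.support → v ∉ T₂.support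

section Aux

open List

variable {V : Type*} [DecidableEq V] {G : SimpleGraph V}

lemma walk_countP_edges {a b : V} (p : G.Walk a b) (v : V) :
    p.edges.countP (fun e => decide (v ∈ e)) + (if v = a then 1 else 0) + (if v = b then 1 else 0)
      = 2 * p.support.count v := by
  induction p with
  | nil =>
    rename_i u
    by_cases h : v = u <;> simp [List.count_cons, h, eq_comm]
  | @cons x y z h q ih =>
    have hxy : x ≠ y := G.ne_of_adj h
    simp only [SimpleGraph.Walk.edges_cons, SimpleGraph.Walk.support_cons,
      List.countP_cons, List.count_cons, beq_iff_eq, decide_eq_true_eq, Sym2.mem_iff]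
    have h1 : (if v = x ∨ v = y then 1 else 0) = (if v = x then 1 else 0) + (if v = y then 1 else 0) := by
      by_cases h2 : v = x <;> by_cases h3 : v = y <;> simp_all
    have h2 : (if x = v then 1 else 0) = if v = x then 1 else 0 := by
      rcases eq_or_ne v x with rfl | h3
      · simp
      · simp [if_neg h3, if_neg (Ne.symm h3)]
    rw [h1, h2]
    omega

/-- Counting version at the trail level. -/
lemma trail_countP_edges (T : GraphTrail G) (v : V) :
    T.edges.countP (fun e => decide (v ∈ e)) + (if v = T.first then 1 else 0)
      + (if v = T.last then 1 else 0) = 2 * T.support.count v :=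
  walk_countP_edges T.walk v

lemma sum_countP_le [Fintype V] (D : Finset (GraphTrail G)) (hD : TrailsEdgeDisjoint D) (v : V) :
    ∑ T ∈ D, T.edges.countP (fun e => decide (v ∈ e)) ≤ (G.incidenceSet v).ncard := by
  classical
  have hfin : (G.incidenceSet v).Finite := Set.toFinite _
  set f : GraphTrail G → Finset (Sym2 V) :=
    fun T => (T.edges.filter (fun e => decide (v ∈ e))).toFinset with hf
  have hcard : ∀ T : GraphTrail G, (f T).card = T.edges.countP (fun e => decide (v ∈ e)) := by
    intro T
    simp only [hf, GraphTrail.edges]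
    rw [List.toFinset_card_of_nodup (T.isTrail.edges_nodup.filter _),
      List.countP_eq_length_filter]
  have hdisj : ∀ T1 ∈ D, ∀ T2 ∈ D, T1 ≠ T2 → Disjoint (f T1) (f T2) := by
    intro T1 h1 T2 h2 hne
    rw [Finset.disjoint_left]
    intro e he1 he2
    simp only [hf, GraphTrail.edges, List.mem_toFinset, List.mem_filter] at he1 he2
    exact hD h1 h2 hne e he1.1 he2.1
  calc ∑ T ∈ D, T.edges.countP (fun e => decide (v ∈ e))
      = ∑ T ∈ D, (f T).card := by simp [hcard]
    _ = (D.biUnion f).card := (Finset.card_biUnion hdisj).symm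
    _ ≤ hfin.toFinset.card := by
        apply Finset.card_le_card
        intro e he
        rw [Finset.mem_biUnion] at he
        obtain ⟨T, hT, he⟩ := he
        simp only [hf, GraphTrail.edges, List.mem_toFinset, List.mem_filter] at he
        rw [Set.Finite.mem_toFinset]
        exact ⟨T.walk.edges_subset_edgeSet he.1, by simpa using he.2⟩
    _ = (G.incidenceSet v).ncard := (Set.ncard_eq_toFinset_card _ hfin).symm

lemma incidence_ncard (hcubic : ∀ v : V, (G.neighborSet v).ncard = 3) (v : V) :
    (G.incidenceSet v).ncard = 3 := by
  rw [← Nat.card_coe_set_eq, Nat.card_congr (G.incidenceSetEquivNeighborSet v),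
    Nat.card_coe_set_eq, hcubic]

lemma trail_rev {V : Type*} {G : SimpleGraph V} (T : GraphTrail G) :
    ∃ T' : GraphTrail G, T'.first = T.last ∧ T'.last = T.first ∧
      (∀ e, e ∈ T'.edges ↔ e ∈ T.edges) ∧ T'.edges.length = T.edges.length ∧
      (∀ u, u ∈ T'.support ↔ u ∈ T.support) ∧
      (∀ [DecidableEq V], ∀ v : V, T'.support.count v = T.support.count v) := by
  refine ⟨⟨T.last, T.first, T.walk.reverse, T.isTrail.reverse⟩, rfl, rfl, ?_, ?_, ?_, ?_⟩
  · intro e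
    simp [GraphTrail.edges, SimpleGraph.Walk.edges_reverse]
  · simp [GraphTrail.edges, SimpleGraph.Walk.edges_reverse]
  · intro u
    simp [GraphTrail.support, SimpleGraph.Walk.support_reverse]
  · intro _ v
    simp [GraphTrail.support, SimpleGraph.Walk.support_reverse, List.count_reverse]

lemma two_le_count_closed {V : Type*} [DecidableEq V] {G : SimpleGraph V} {a : V}
    (p : G.Walk a a) (h : p.edges ≠ []) : 2 ≤ p.support.count a := by
  cases p with
  | nil => simp [SimpleGraph.Walk.edges_nil] at h
  | @cons _ c _ hadj q =>
    have h1 : a ∈ q.support := q.end_mem_support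
    have h2 : 1 ≤ q.support.count a := List.count_pos_iff.mpr h1
    simp only [SimpleGraph.Walk.support_cons, List.count_cons]
    simp [h2]

lemma countP_pos_of_mem_support {V : Type*} [DecidableEq V] {G : SimpleGraph V}
    (T : GraphTrail G) (v : V) (hv : v ∈ T.support) (hne : T.edges ≠ []) :
    1 ≤ T.edges.countP (fun e => decide (v ∈ e)) := by
  have key := trail_countP_edges T v
  have hc : 1 ≤ T.support.count v := List.count_pos_iff.mpr hv
  by_contra hcon
  push_neg at hcon
  interval_cases h : T.edges.countP (fun e => decide (v ∈ e))
  · -- countP = 0, so v = first = last and count = 1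
    have hf : v = T.first := by
      by_contra hf
      rw [if_neg hf] at key
      split at key <;> omega
    have hl : v = T.last := by
      by_contra hl
      rw [if_neg hl] at key
      split at key <;> omega
    rw [if_pos hf, if_pos hl] at key
    -- so count v = 1, but walk is closed non-nil at v
    have : T.support.count v = 1 := by omega
    have hp : 2 ≤ T.walk.support.count T.first := by
      have hfl : T.last = T.first := by rw [← hf, ← hl]
      have := two_le_count_closed (T.walk.copy rfl hfl) (by
        rw [SimpleGraph.Walk.edges_copy]; exact hne)
      simpa [SimpleGraph.Walk.support_copy] using this
    have heq : T.support.count v = T.walk.support.count T.first := by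
      rw [hf]; rfl
    omega

lemma exists_drop_first {V : Type*} [DecidableEq V] {G : SimpleGraph V}
    (T : GraphTrail G) (v : V) (hne : T.edges ≠ []) (hv : v = T.first) :
    ∃ T' : GraphTrail G, T'.edges.length + 1 = T.edges.length ∧
      (∀ e ∈ T'.edges, e ∈ T.edges) ∧
      (∀ u ∈ T'.support, u ∈ T.support) ∧
      (∀ u ∈ T.support, u ≠ v → u ∈ T'.support) ∧
      (2 ≤ T.support.count v → v ∈ T'.support) := by
  obtain ⟨a, b, p, hp⟩ := T
  simp only [GraphTrail.edges, GraphTrail.support] at *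
  subst hv
  cases p with
  | nil => simp at hne
  | @cons _ c _ hadj q =>
    refine ⟨⟨c, b, q, hp.of_cons⟩, ?_, ?_, ?_, ?_, ?_⟩
    · simp [GraphTrail.edges]
    · intro e he
      simp only [GraphTrail.edges] at he
      simp [SimpleGraph.Walk.edges_cons, he]
    · intro u hu
      simp only [GraphTrail.support] at hu
      simp [SimpleGraph.Walk.support_cons, hu]
    · intro u hu hune
      simp only [SimpleGraph.Walk.support_cons, List.mem_cons] at hu
      rcases hu with rfl | hu
      · exact absurd rfl hune
      · simpa [GraphTrail.support] using hu
    · intro hcount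
      simp only [SimpleGraph.Walk.support_cons, List.count_cons] at hcount
      simp only [beq_self_eq_true, if_true] at hcount
      have h1 : 1 ≤ q.support.count v := by omega
      simpa [GraphTrail.support] using List.count_pos_iff.mp h1

lemma exists_drop {V : Type*} [DecidableEq V] {G : SimpleGraph V}
    (T : GraphTrail G) (v : V) (hne : T.edges ≠ []) (hv : v = T.first ∨ v = T.last) :
    ∃ T' : GraphTrail G, T'.edges.length + 1 = T.edges.length ∧
      (∀ e ∈ T'.edges, e ∈ T.edges) ∧
      (∀ u ∈ T'.support, u ∈ T.support) ∧
      (∀ u ∈ T.support, u ≠ v → u ∈ T'.support) ∧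
      (2 ≤ T.support.count v → v ∈ T'.support) := by
  rcases hv with hv | hv
  · exact exists_drop_first T v hne hv
  · obtain ⟨R, hRf, hRl, hRe, hRlen, hRs, hRc⟩ := trail_rev T
    have hRne : R.edges ≠ [] := by
      intro h
      apply hne
      have := hRlen
      rw [h] at this
      exact List.length_eq_zero_iff.mp this.symm
    obtain ⟨T', h1, h2, h3, h4, h5⟩ := exists_drop_first R v hRne (by rw [hRf, ← hv])
    refine ⟨T', by omega, fun e he => (hRe e).mp (h2 e he),
      fun u hu => (hRs u).mp (h3 u hu),
      fun u hu hune => h4 u ((hRs u).mpr hu) hune,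
      fun hc => h5 (by rw [hRc v]; exact hc)⟩

lemma exists_merge {V : Type*} {G : SimpleGraph V} (T1 T2 : GraphTrail G)
    (hdisj : ∀ e ∈ T1.edges, e ∉ T2.edges) (h : T1.last = T2.first) :
    ∃ T : GraphTrail G, (∀ e, e ∈ T.edges ↔ (e ∈ T1.edges ∨ e ∈ T2.edges)) ∧
      (∀ u, u ∈ T.support ↔ (u ∈ T1.support ∨ u ∈ T2.support)) := by
  obtain ⟨a, b, p, hp⟩ := T1
  obtain ⟨b', c, q, hq⟩ := T2
  simp only [GraphTrail.edges, GraphTrail.support] at *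
  subst h
  refine ⟨⟨a, c, p.append q, ?_⟩, ?_, ?_⟩
  · rw [SimpleGraph.Walk.isTrail_def, SimpleGraph.Walk.edges_append]
    exact List.Nodup.append hp.edges_nodup hq.edges_nodup hdisj
  · intro e
    simp [GraphTrail.edges, SimpleGraph.Walk.edges_append]
  · intro u
    simp [GraphTrail.support, SimpleGraph.Walk.mem_support_append_iff]

end Aux
/-- Let `G` be a cubic graph and `C` a minimum trail cover of `G`.  Then every
vertex is traversed by at most two trails of `C`, and there is a path cover of `G` with `|C|`
paths; consequently the minimum trail cover size of a cubic graph equals its minimum path cover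
size. -/
theorem cubic_min_trail_cover_eq_min_path_cover {V : Type*} [Fintype V] [DecidableEq V]
    (G : SimpleGraph V) (hcubic : ∀ v : V, (G.neighborSet v).ncard = 3)
    (C : Finset (GraphTrail G)) (hC : IsTrailCover G C)
    (hmin : ∀ C' : Finset (GraphTrail G), IsTrailCover G C' → C.card ≤ C'.card) :
    (∀ v : V, (C.filter fun T => v ∈ T.support).card ≤ 2) ∧
    ∃ P : Finset (GraphTrail G), IsPathCover G P ∧ P.card = C.card ∧
      ∀ P' : Finset (GraphTrail G), IsPathCover G P' → P.card ≤ P'.card := by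
  classical
  have hdeg : ∀ (D : Finset (GraphTrail G)), TrailsEdgeDisjoint D → ∀ v : V,
      ∑ T ∈ D, T.edges.countP (fun e => decide (v ∈ e)) ≤ 3 := by
    intro D hD v
    calc ∑ T ∈ D, T.edges.countP (fun e => decide (v ∈ e))
        ≤ (G.incidenceSet v).ncard := sum_countP_le D hD v
      _ = 3 := incidence_ncard hcubic v
  -- dropping a nil trail from a minimum cover is impossible when its vertex is covered elsewhere
  have herase : ∀ (D : Finset (GraphTrail G)), IsTrailCover G D → D.card ≤ C.card →
      ∀ T ∈ D, T.edges = [] →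
      (∃ T'' ∈ D, T'' ≠ T ∧ T.first ∈ T''.support) → False := by
    intro D hD hDcard T hT hnil ⟨T'', hT''D, hne'', hv''⟩
    have hsupp : T.support = [T.first] := by
      obtain ⟨a, b, p, hp⟩ := T
      cases p with
      | nil => rfl
      | cons h q => simp [GraphTrail.edges] at hnil
    have hcover : IsTrailCover G (D.erase T) := by
      constructor
      · exact hD.1.mono (by simp [Finset.coe_subset])
      · intro u
        obtain ⟨T0, hT0, hu⟩ := hD.2 u
        by_cases hT0T : T0 = T
        · subst hT0T
          rw [hsupp, List.mem_singleton] at hu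
          subst hu
          exact ⟨T'', Finset.mem_erase.mpr ⟨hne'', hT''D⟩, hv''⟩
        · exact ⟨T0, Finset.mem_erase.mpr ⟨hT0T, hT0⟩, hu⟩
    have h1 := hmin _ hcover
    have h2 := Finset.card_erase_of_mem hT
    have h3 : 0 < D.card := Finset.card_pos.mpr ⟨T, hT⟩
    omega
  have part1 : ∀ v : V, (C.filter fun T => v ∈ T.support).card ≤ 2 := by
    intro v
    by_contra hcon
    push_neg at hcon
    rw [Finset.two_lt_card_iff] at hcon
    obtain ⟨T1, T2, T3, hT1, hT2, hT3, h12, h13, h23⟩ := hcon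
    rw [Finset.mem_filter] at hT1 hT2 hT3
    -- none is nil
    have hnonnil : ∀ T ∈ C, v ∈ T.support → T.edges ≠ [] := by
      intro T hT hvT hnil
      have hvfirst : v = T.first := by
        have hsupp : T.support = [T.first] := by
          obtain ⟨a, b, p, hp⟩ := T
          cases p with
          | nil => rfl
          | cons h q => simp [GraphTrail.edges] at hnil
        rw [hsupp, List.mem_singleton] at hvT
        exact hvT
      -- some other trail among T1 T2 T3 differs from T and contains v
      have : ∃ T'' ∈ C, T'' ≠ T ∧ T.first ∈ T''.support := by
        rw [← hvfirst]
        by_cases h1 : T1 = T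
        · subst h1
          exact ⟨T2, hT2.1, fun h => h12 h.symm, hT2.2⟩
        · exact ⟨T1, hT1.1, h1, hT1.2⟩
      exact herase C hC le_rfl T hT hnil this
    -- each of the three trails uses exactly one edge at v
    have hsub : {T1, T2, T3} ⊆ C := by
      intro T hT
      simp only [Finset.mem_insert, Finset.mem_singleton] at hT
      rcases hT with rfl | rfl | rfl
      exacts [hT1.1, hT2.1, hT3.1]
    have hsum3 : T1.edges.countP (fun e => decide (v ∈ e)) +
        T2.edges.countP (fun e => decide (v ∈ e)) +
        T3.edges.countP (fun e => decide (v ∈ e)) ≤ 3 := by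
      have h1 : ∑ T ∈ ({T1, T2, T3} : Finset (GraphTrail G)),
          T.edges.countP (fun e => decide (v ∈ e)) ≤ 3 :=
        le_trans (Finset.sum_le_sum_of_subset hsub) (hdeg C hC.1 v)
      rw [Finset.sum_insert (by simp [h12, h13]), Finset.sum_insert (by simp [h23]),
        Finset.sum_singleton] at h1
      omega
    have hpos : ∀ T, T ∈ C → v ∈ T.support →
        1 ≤ T.edges.countP (fun e => decide (v ∈ e)) := fun T hT hv =>
      countP_pos_of_mem_support T v hv (hnonnil T hT hv)
    have hone : ∀ T, T ∈ C → v ∈ T.support →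
        T.edges.countP (fun e => decide (v ∈ e)) = 1 →
        (v = T.first ∧ v ≠ T.last) ∨ (v = T.last ∧ v ≠ T.first) := by
      intro T hT hv h1
      have key := trail_countP_edges T v
      rw [h1] at key
      have hc : 1 ≤ T.support.count v := List.count_pos_iff.mpr hv
      by_cases hf : v = T.first <;> by_cases hl : v = T.last
      · exfalso; rw [if_pos hf, if_pos hl] at key; omega
      · exact Or.inl ⟨hf, hl⟩
      · exact Or.inr ⟨hl, hf⟩
      · exfalso; rw [if_neg hf, if_neg hl] at key; omega
    have e1 : T1.edges.countP (fun e => decide (v ∈ e)) = 1 := by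
      have := hpos T1 hT1.1 hT1.2; have := hpos T2 hT2.1 hT2.2; have := hpos T3 hT3.1 hT3.2
      omega
    have e2 : T2.edges.countP (fun e => decide (v ∈ e)) = 1 := by
      have := hpos T1 hT1.1 hT1.2; have := hpos T2 hT2.1 hT2.2; have := hpos T3 hT3.1 hT3.2
      omega
    -- normalize T1 to end at v, T2 to start at v
    obtain ⟨A, hAe, hAs, hAl⟩ : ∃ A : GraphTrail G, (∀ e, e ∈ A.edges ↔ e ∈ T1.edges) ∧
        (∀ u, u ∈ A.support ↔ u ∈ T1.support) ∧ A.last = v := by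
      rcases hone T1 hT1.1 hT1.2 e1 with ⟨hf, _⟩ | ⟨hl, _⟩
      · obtain ⟨R, hRf, hRl, hRe, _, hRs, _⟩ := trail_rev T1
        exact ⟨R, hRe, hRs, by rw [hRl, ← hf]⟩
      · exact ⟨T1, fun _ => Iff.rfl, fun _ => Iff.rfl, hl.symm⟩
    obtain ⟨B, hBe, hBs, hBf⟩ : ∃ B : GraphTrail G, (∀ e, e ∈ B.edges ↔ e ∈ T2.edges) ∧
        (∀ u, u ∈ B.support ↔ u ∈ T2.support) ∧ B.first = v := by
      rcases hone T2 hT2.1 hT2.2 e2 with ⟨hf, _⟩ | ⟨hl, _⟩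
      · exact ⟨T2, fun _ => Iff.rfl, fun _ => Iff.rfl, hf.symm⟩
      · obtain ⟨R, hRf, hRl, hRe, _, hRs, _⟩ := trail_rev T2
        exact ⟨R, hRe, hRs, by rw [hRf, ← hl]⟩
    have hdisjAB : ∀ e ∈ A.edges, e ∉ B.edges := by
      intro e heA heB
      exact hC.1 (Finset.mem_coe.mpr hT1.1) (Finset.mem_coe.mpr hT2.1) h12 e
        ((hAe e).mp heA) ((hBe e).mp heB)
    obtain ⟨M, hMe, hMs⟩ := exists_merge A B hdisjAB (by rw [hAl, hBf])
    -- build the smaller cover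
    set C' : Finset (GraphTrail G) := insert M ((C.erase T1).erase T2) with hC'
    have hC'mem : ∀ X ∈ (C.erase T1).erase T2, X ∈ C ∧ X ≠ T1 ∧ X ≠ T2 := by
      intro X hX
      rw [Finset.mem_erase, Finset.mem_erase] at hX
      exact ⟨hX.2.2, hX.2.1, hX.1⟩
    have hMedge : ∀ e ∈ M.edges, e ∈ T1.edges ∨ e ∈ T2.edges := by
      intro e he
      rcases (hMe e).mp he with h | h
      · exact Or.inl ((hAe e).mp h)
      · exact Or.inr ((hBe e).mp h)
    have hcover' : IsTrailCover G C' := by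
      constructor
      · intro X hX Y hY hXY
        simp only [hC', Finset.coe_insert, Set.mem_insert_iff, Finset.mem_coe] at hX hY
        rcases hX with rfl | hX <;> rcases hY with rfl | hY
        · exact absurd rfl hXY
        · intro e heM heY
          obtain ⟨hYC, hYT1, hYT2⟩ := hC'mem Y hY
          rcases hMedge e heM with h | h
          · exact hC.1 (Finset.mem_coe.mpr hT1.1) (Finset.mem_coe.mpr hYC)
              (fun hh => hYT1 hh.symm) e h heY
          · exact hC.1 (Finset.mem_coe.mpr hT2.1) (Finset.mem_coe.mpr hYC)
              (fun hh => hYT2 hh.symm) e h heY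
        · intro e heX heM
          obtain ⟨hXC, hXT1, hXT2⟩ := hC'mem X hX
          rcases hMedge e heM with h | h
          · exact hC.1 (Finset.mem_coe.mpr hXC) (Finset.mem_coe.mpr hT1.1) hXT1 e heX h
          · exact hC.1 (Finset.mem_coe.mpr hXC) (Finset.mem_coe.mpr hT2.1) hXT2 e heX h
        · obtain ⟨hXC, _, _⟩ := hC'mem X hX
          obtain ⟨hYC, _, _⟩ := hC'mem Y hY
          exact hC.1 (Finset.mem_coe.mpr hXC) (Finset.mem_coe.mpr hYC) hXY
      · intro u
        obtain ⟨T0, hT0, hu⟩ := hC.2 u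
        by_cases h01 : T0 = T1
        · exact ⟨M, Finset.mem_insert_self _ _,
            (hMs u).mpr (Or.inl ((hAs u).mpr (h01 ▸ hu)))⟩
        · by_cases h02 : T0 = T2
          · exact ⟨M, Finset.mem_insert_self _ _,
              (hMs u).mpr (Or.inr ((hBs u).mpr (h02 ▸ hu)))⟩
          · exact ⟨T0, Finset.mem_insert_of_mem
              (Finset.mem_erase.mpr ⟨h02, Finset.mem_erase.mpr ⟨h01, hT0⟩⟩), hu⟩
    have hcard1 : (C.erase T1).card = C.card - 1 := Finset.card_erase_of_mem hT1.1
    have hT2e : T2 ∈ C.erase T1 := Finset.mem_erase.mpr ⟨fun h => h12 h.symm, hT2.1⟩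
    have hcard2 : ((C.erase T1).erase T2).card = (C.erase T1).card - 1 :=
      Finset.card_erase_of_mem hT2e
    have hcard3 : C'.card ≤ ((C.erase T1).erase T2).card + 1 := Finset.card_insert_le _ _
    have hpos1 : 0 < (C.erase T1).card := Finset.card_pos.mpr ⟨T2, hT2e⟩
    have hpos0 : 0 < C.card := Finset.card_pos.mpr ⟨T1, hT1.1⟩
    have := hmin C' hcover'
    omega
  -- Part 2: take a trail cover of minimum cardinality with minimum total length
  let len : Finset (GraphTrail G) → ℕ := fun D => ∑ T ∈ D, T.edges.length
  have hex : ∃ n, ∃ D : Finset (GraphTrail G), IsTrailCover G D ∧ D.card = C.card ∧ len D = n :=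
    ⟨len C, C, hC, rfl, rfl⟩
  obtain ⟨D, hDcover, hDcard, hDlen⟩ := Nat.find_spec hex
  have hlenmin : ∀ D' : Finset (GraphTrail G), IsTrailCover G D' → D'.card = C.card →
      len D ≤ len D' := by
    intro D' h1 h2
    by_contra h
    push_neg at h
    exact Nat.find_min hex (hDlen ▸ h) ⟨D', h1, h2, rfl⟩
  have hM1 : ∀ v : V, 1 ≤ ∑ T ∈ D, T.support.count v := by
    intro v
    obtain ⟨T, hT, hv⟩ := hDcover.2 v
    calc 1 ≤ T.support.count v := List.count_pos_iff.mpr hv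
      _ ≤ ∑ T ∈ D, T.support.count v :=
        Finset.single_le_sum (f := fun T => T.support.count v) (fun i _ => Nat.zero_le _) hT
  have hM2 : ∀ v : V, ∑ T ∈ D, T.support.count v ≤ 1 := by
    intro v
    by_contra hcon
    push_neg at hcon
    by_cases hnil : ∃ T ∈ D, v ∈ T.support ∧ T.edges = []
    · obtain ⟨T, hT, hvT, hTnil⟩ := hnil
      have hsupp : T.support = [T.first] := by
        obtain ⟨a, b, p, hp⟩ := T
        cases p with
        | nil => rfl
        | cons h q => simp [GraphTrail.edges] at hTnil
      have hvfirst : v = T.first := by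
        rw [hsupp, List.mem_singleton] at hvT; exact hvT
      have hcount1 : T.support.count v = 1 := by
        rw [hsupp, hvfirst]; simp
      have hrest : 0 < ∑ T' ∈ D.erase T, T'.support.count v := by
        have := Finset.sum_erase_add D (fun T => T.support.count v) hT
        omega
      obtain ⟨T'', hT''mem, hT''pos⟩ : ∃ T'' ∈ D.erase T, 0 < T''.support.count v := by
        by_contra hall
        push_neg at hall
        have : ∑ T' ∈ D.erase T, T'.support.count v = 0 :=
          Finset.sum_eq_zero (fun i hi => Nat.le_zero.mp (hall i hi))
        omega
      exact herase D hDcover hDcard.le T hT hTnil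
        ⟨T'', Finset.mem_of_mem_erase hT''mem, (Finset.mem_erase.mp hT''mem).1,
          hvfirst ▸ List.count_pos_iff.mp hT''pos⟩
    · push_neg at hnil
      by_cases hend : ∃ T ∈ D, v ∈ T.support ∧ (v = T.first ∨ v = T.last)
      · obtain ⟨T, hT, hvT, hvend⟩ := hend
        have hTne := hnil T hT hvT
        obtain ⟨T', hlen', hsubE, hsubS, hkeep, hvkeep⟩ := exists_drop T v hTne hvend
        set D' := insert T' (D.erase T) with hD'
        have hD'cover : IsTrailCover G D' := by
          constructor
          · intro X hX Y hY hXY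
            simp only [hD', Finset.coe_insert, Set.mem_insert_iff, Finset.mem_coe] at hX hY
            rcases hX with rfl | hX <;> rcases hY with rfl | hY
            · exact absurd rfl hXY
            · intro e he1 he2
              exact hDcover.1 (Finset.mem_coe.mpr hT)
                (Finset.mem_coe.mpr (Finset.mem_of_mem_erase hY))
                (fun h => (Finset.mem_erase.mp hY).1 h.symm) e (hsubE e he1) he2
            · intro e he1 he2
              exact hDcover.1 (Finset.mem_coe.mpr (Finset.mem_of_mem_erase hX))
                (Finset.mem_coe.mpr hT) (Finset.mem_erase.mp hX).1 e he1 (hsubE e he2)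
            · exact hDcover.1 (Finset.mem_coe.mpr (Finset.mem_of_mem_erase hX))
                (Finset.mem_coe.mpr (Finset.mem_of_mem_erase hY)) hXY
          · intro u
            obtain ⟨T0, hT0, hu⟩ := hDcover.2 u
            by_cases h0 : T0 = T
            · subst h0
              by_cases huv : u = v
              · subst huv
                by_cases h2c : 2 ≤ T0.support.count u
                · exact ⟨T', Finset.mem_insert_self _ _, hvkeep h2c⟩
                · have hc1 : T0.support.count u = 1 := by
                    have := List.count_pos_iff.mpr hu; omega
                  have hrest : 0 < ∑ Tx ∈ D.erase T0, Tx.support.count u := by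
                    have := Finset.sum_erase_add D (fun T => T.support.count u) hT0
                    omega
                  obtain ⟨T'', hT''mem, hT''pos⟩ :
                      ∃ T'' ∈ D.erase T0, 0 < T''.support.count u := by
                    by_contra hall
                    push_neg at hall
                    have : ∑ Tx ∈ D.erase T0, Tx.support.count u = 0 :=
                      Finset.sum_eq_zero (fun i hi => Nat.le_zero.mp (hall i hi))
                    omega
                  exact ⟨T'', Finset.mem_insert_of_mem hT''mem,
                    List.count_pos_iff.mp hT''pos⟩
              · exact ⟨T', Finset.mem_insert_self _ _, hkeep u hu huv⟩
            · exact ⟨T0, Finset.mem_insert_of_mem (Finset.mem_erase.mpr ⟨h0, hT0⟩), hu⟩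
        have hDpos : 0 < D.card := Finset.card_pos.mpr ⟨T, hT⟩
        by_cases hT'mem : T' ∈ D.erase T
        · have hcard' : D'.card = D.card - 1 := by
            rw [hD', Finset.insert_eq_self.mpr hT'mem, Finset.card_erase_of_mem hT]
          have := hmin D' hD'cover
          omega
        · have hcard' : D'.card = D.card := by
            rw [hD', Finset.card_insert_of_notMem hT'mem, Finset.card_erase_of_mem hT]
            omega
          have h1 : len D' = T'.edges.length + ∑ Tx ∈ D.erase T, Tx.edges.length := by
            rw [hD']
            exact Finset.sum_insert hT'mem
          have h2 : ∑ Tx ∈ D.erase T, Tx.edges.length + T.edges.length = len D :=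
            Finset.sum_erase_add D _ hT
          have := hlenmin D' hD'cover (by rw [hcard', hDcard])
          omega
      · push_neg at hend
        have hkey : ∀ T ∈ D, T.edges.countP (fun e => decide (v ∈ e))
            = 2 * T.support.count v := by
          intro T hT
          have key := trail_countP_edges T v
          by_cases hv : v ∈ T.support
          · obtain ⟨h1, h2⟩ := hend T hT hv
            rw [if_neg h1, if_neg h2] at key
            omega
          · have hfmem : T.first ∈ T.support := T.walk.start_mem_support
            have hlmem : T.last ∈ T.support := T.walk.end_mem_support
            have hc0 : T.support.count v = 0 := List.count_eq_zero_of_not_mem hv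
            rw [if_neg (fun h : v = T.first => hv (h.symm ▸ hfmem)),
              if_neg (fun h : v = T.last => hv (h.symm ▸ hlmem))] at key
            omega
        have hsum := hdeg D hDcover.1 v
        have h2 : ∑ T ∈ D, T.edges.countP (fun e => decide (v ∈ e))
            = 2 * ∑ T ∈ D, T.support.count v := by
          rw [Finset.mul_sum]
          exact Finset.sum_congr rfl hkey
        omega
  have hM : ∀ v : V, ∑ T ∈ D, T.support.count v = 1 := fun v => le_antisymm (hM2 v) (hM1 v)
  have hcount_le : ∀ T ∈ D, ∀ v : V, T.support.count v ≤ 1 := by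
    intro T hT v
    calc T.support.count v ≤ ∑ T ∈ D, T.support.count v :=
        Finset.single_le_sum (f := fun T => T.support.count v) (fun i _ => Nat.zero_le _) hT
      _ = 1 := hM v
  have hpathcover : IsPathCover G D := by
    refine ⟨?_, hDcover.2, ?_⟩
    · intro T hT
      apply SimpleGraph.Walk.IsPath.mk'
      rw [List.nodup_iff_count_le_one]
      exact hcount_le T hT
    · intro X hX Y hY hXY u huX huY
      have h1 : 1 ≤ X.support.count u := List.count_pos_iff.mpr huX
      have h2 : 1 ≤ Y.support.count u := List.count_pos_iff.mpr huY
      have hsub : ({X, Y} : Finset (GraphTrail G)) ⊆ D := by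
        intro Z hZ
        simp only [Finset.mem_insert, Finset.mem_singleton] at hZ
        rcases hZ with rfl | rfl
        exacts [Finset.mem_coe.mp hX, Finset.mem_coe.mp hY]
      have h3 := Finset.sum_le_sum_of_subset (f := fun T => T.support.count u) hsub
      rw [Finset.sum_pair hXY, hM u] at h3
      omega
  have pc2tc : ∀ P' : Finset (GraphTrail G), IsPathCover G P' → IsTrailCover G P' := by
    intro P' hP'
    refine ⟨?_, hP'.2.1⟩
    intro X hX Y hY hXY e heX heY
    induction e using Sym2.ind with
    | _ u w =>
      exact hP'.2.2 hX hY hXY u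
        (SimpleGraph.Walk.fst_mem_support_of_mem_edges X.walk heX)
        (SimpleGraph.Walk.fst_mem_support_of_mem_edges Y.walk heY)
  refine ⟨part1, D, hpathcover, hDcard, ?_⟩
  intro P' hP'
  rw [hDcard]
  exact hmin P' (pc2tc P' hP')
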